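/- Let p ≥ 53 be a prime number and let H be a cyclic subgroup of PGL₂(𝔽_p) whose order divides p − 1 or divides p + 1. Then there exists an element M ∈ PGL₂(𝔽_p) such that M¹² is not conjugate in PGL₂(𝔽_p) to any element of H. -/
import Mathlib


open Matrix

/-- The subgroup of (invertible) scalar matrices in `GL₂(F)`. -/
def scalarSubgroup (F : Type*) [Field F] : Subgroup (GL (Fin 2) F) :=
  (Units.map (algebraMap F (Matrix (Fin 2) (Fin 2) F)).toMonoidHom).range

instance scalarSubgroup_normal (F : Type*) [Field F] : (scalarSubgroup F).Normal := by
  constructor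
  rintro x ⟨u, rfl⟩ g
  refine ⟨u, Units.ext ?_⟩
  have : (↑g : Matrix (Fin 2) (Fin 2) F) * algebraMap F (Matrix (Fin 2) (Fin 2) F) ↑u *
      (↑g⁻¹ : Matrix (Fin 2) (Fin 2) F) = algebraMap F (Matrix (Fin 2) (Fin 2) F) ↑u := by
    rw [← Algebra.commutes, mul_assoc, Units.mul_inv, mul_one]
  simpa using this.symm

/-- `PGL₂(F)`: the quotient of `GL₂(F)` by its subgroup of scalar matrices. -/
def PGL2 (F : Type*) [Field F] := GL (Fin 2) F ⧸ scalarSubgroup F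

noncomputable instance (F : Type*) [Field F] : Group (PGL2 F) :=
  QuotientGroup.Quotient.group (scalarSubgroup F)

/-- The projection `GL₂(F) → PGL₂(F)`. -/
def toPGL2 (F : Type*) [Field F] : GL (Fin 2) F →* PGL2 F :=
  QuotientGroup.mk' (scalarSubgroup F)


lemma unipow (n : ℕ) (F : Type*) [Field F] :
    (!![1,1;0,1] : Matrix (Fin 2) (Fin 2) F)^n = !![1,(n:F);0,1] := by
  induction n with
  | zero => simp [Matrix.one_fin_two]
  | succ k ih => rw [pow_succ, ih, Matrix.mul_fin_two]; push_cast; ring_nf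

/-- For `p ≥ 53` prime and `H` a cyclic subgroup of `PGL₂(𝔽_p)` of order dividing `p - 1`
or `p + 1`, there is an element `M ∈ PGL₂(𝔽_p)` whose 12th power is not conjugate to any
element of `H`. -/
theorem exists_twelfth_power_not_conj (p : ℕ) [Fact p.Prime] (h53 : 53 ≤ p)
    (H : Subgroup (PGL2 (ZMod p))) (hcyc : IsCyclic H)
    (hord : Nat.card H ∣ p - 1 ∨ Nat.card H ∣ p + 1) :
    ∃ M : PGL2 (ZMod p), ∀ h ∈ H, ¬ IsConj (M ^ 12) h := by
  have hp := (Fact.out : p.Prime)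
  set A : Matrix (Fin 2) (Fin 2) (ZMod p) := !![1,1;0,1] with hA
  have h12 : ((12:ℕ) : ZMod p) ≠ 0 := by
    rw [Ne, ZMod.natCast_eq_zero_iff]
    intro hd; have := Nat.le_of_dvd (by norm_num) hd; omega
  have hdet : IsUnit A.det := by simp [hA, Matrix.det_fin_two_of]
  let U : GL (Fin 2) (ZMod p) := Matrix.GeneralLinearGroup.mk'' A hdet
  have hUval : (U : Matrix (Fin 2) (Fin 2) (ZMod p)) = A := rfl
  refine ⟨toPGL2 (ZMod p) U, ?_⟩
  set M : PGL2 (ZMod p) := toPGL2 (ZMod p) U with hM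
  -- (M^12)^p = 1
  have hpow1 : (M ^ 12) ^ p = 1 := by
    rw [hM, ← map_pow, ← map_pow, ← map_one (toPGL2 (ZMod p))]
    congr 1
    ext : 1
    show ((U ^ 12) ^ p : GL (Fin 2) (ZMod p)).val = (1 : GL (Fin 2) (ZMod p)).val
    rw [Units.val_pow_eq_pow_val, Units.val_pow_eq_pow_val, ← pow_mul, hUval, hA, unipow, Units.val_one]
    have : ((12 * p : ℕ) : ZMod p) = 0 := by
      simp [Nat.cast_mul, ZMod.natCast_self]
    rw [this, Matrix.one_fin_two]
  -- M^12 ≠ 1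
  have hne : M ^ 12 ≠ 1 := by
    rw [hM, ← map_pow]
    intro hcontra
    have hmem : U ^ 12 ∈ scalarSubgroup (ZMod p) :=
      (QuotientGroup.eq_one_iff _).mp hcontra
    obtain ⟨u, hu⟩ := hmem
    have hval : algebraMap (ZMod p) (Matrix (Fin 2) (Fin 2) (ZMod p)) ↑u
        = ((U : Matrix (Fin 2) (Fin 2) (ZMod p)))^12 := by
      have := congrArg Units.val hu
      simpa using this
    have h01 : algebraMap (ZMod p) (Matrix (Fin 2) (Fin 2) (ZMod p)) ↑u 0 1 = 0 := by
      simp [Matrix.algebraMap_matrix_apply]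
    rw [hval, hUval, hA, unipow] at h01
    simp at h01
    exact h12 (by exact_mod_cast h01)
  -- orderOf (M^12) = p
  have hordM : orderOf (M ^ 12) = p := by
    have hdvd : orderOf (M ^ 12) ∣ p := orderOf_dvd_of_pow_eq_one hpow1
    rcases (Nat.Prime.eq_one_or_self_of_dvd hp _ hdvd) with h1 | h1
    · exact absurd (orderOf_eq_one_iff.mp h1) hne
    · exact h1
  intro h hh hconj
  obtain ⟨c, hc⟩ := hconj
  have hordh : orderOf h = p := by rw [← hc.orderOf_eq, hordM]
  have hdvdH : orderOf h ∣ Nat.card H := Subgroup.orderOf_dvd_natCard H hh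
  rw [hordh] at hdvdH
  rcases hord with hd | hd
  · have : p ∣ p - 1 := hdvdH.trans hd
    have := Nat.le_of_dvd (by omega) this
    omega
  · have hpp : p ∣ p + 1 := hdvdH.trans hd
    have h1 : p ∣ 1 := by simpa using Nat.dvd_sub hpp (dvd_refl p)
    have := Nat.le_of_dvd one_pos h1
    omega
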